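/- arXiv:quant-ph/0503236 — 3 statements merged into one kernel-verified Lean document; each statement's English description precedes it below -/
import Mathlib

section
/- There is no linear operation that clones an arbitrary quantum state: there is no linear map U on the tensor product Hilbert space such that U(|φ⟩⊗|e⟩) = |φ⟩⊗|φ⟩ for all unit vectors |φ⟩ (for some fixed ancilla state |e⟩). -/
open scoped TensorProduct

/-- Coordinate projection as a linear map. -/
private def coordLM (i : Fin 2) : EuclideanSpace ℂ (Fin 2) →ₗ[ℂ] ℂ where
  toFun v := v i
  map_add' _ _ := rfl
  map_smul' _ _ := rfl

/-- The no-cloning theorem: there is no linear map `U` on the tensor product Hilbert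
space such that `U (φ ⊗ e) = φ ⊗ φ` for every unit vector `φ`, for a fixed ancilla `e`. -/
theorem no_cloning (e : EuclideanSpace ℂ (Fin 2)) :
    ¬ ∃ U : (EuclideanSpace ℂ (Fin 2) ⊗[ℂ] EuclideanSpace ℂ (Fin 2)) →ₗ[ℂ]
        (EuclideanSpace ℂ (Fin 2) ⊗[ℂ] EuclideanSpace ℂ (Fin 2)),
      ∀ φ : EuclideanSpace ℂ (Fin 2), ‖φ‖ = 1 → U (φ ⊗ₜ[ℂ] e) = φ ⊗ₜ[ℂ] φ := by
  rintro ⟨U, hU⟩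
  set b0 : EuclideanSpace ℂ (Fin 2) := EuclideanSpace.single 0 1 with hb0def
  set b1 : EuclideanSpace ℂ (Fin 2) := EuclideanSpace.single 1 1 with hb1def
  have hb0 : ‖b0‖ = 1 := by simp [hb0def]
  have hb1 : ‖b1‖ = 1 := by simp [hb1def]
  set c : ℂ := (((Real.sqrt 2)⁻¹ : ℝ) : ℂ) with hcdef
  have hc : c ≠ 0 := by
    simp [hcdef]
  set ψ : EuclideanSpace ℂ (Fin 2) := c • (b0 + b1) with hψdef
  have horth : (inner ℂ b0 b1 : ℂ) = 0 := by
    simp [hb0def, hb1def, EuclideanSpace.inner_single_left]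
  have hsum : ‖b0 + b1‖ = Real.sqrt 2 := by
    rw [EuclideanSpace.norm_eq]
    norm_num [hb0def, hb1def, EuclideanSpace.single_apply, Fin.sum_univ_two]
  have hψ : ‖ψ‖ = 1 := by
    rw [hψdef, norm_smul, hsum]
    simp [hcdef]
    rw [abs_of_nonneg (by positivity)]
    field_simp
  have h0 := hU b0 hb0
  have h1 := hU b1 hb1
  have hψ' := hU ψ hψ
  have expand : ψ ⊗ₜ[ℂ] e = c • (b0 ⊗ₜ[ℂ] e + b1 ⊗ₜ[ℂ] e) := by
    rw [hψdef, ← TensorProduct.smul_tmul', TensorProduct.add_tmul, smul_add]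
  have key : ψ ⊗ₜ[ℂ] ψ = c • (b0 ⊗ₜ[ℂ] b0 + b1 ⊗ₜ[ℂ] b1) := by
    rw [← hψ', expand, map_smul, map_add, h0, h1]
  -- apply the functional x ⊗ y ↦ x 0 * y 1
  set F : (EuclideanSpace ℂ (Fin 2) ⊗[ℂ] EuclideanSpace ℂ (Fin 2)) →ₗ[ℂ] ℂ :=
    TensorProduct.lift ((LinearMap.mul ℂ ℂ).compl₁₂ (coordLM 0) (coordLM 1)) with hF
  have hFtmul : ∀ x y : EuclideanSpace ℂ (Fin 2), F (x ⊗ₜ[ℂ] y) = x 0 * y 1 := by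
    intro x y
    simp [hF, coordLM]
    rfl
  have hcontr := congrArg F key
  rw [hFtmul, map_smul, map_add, hFtmul, hFtmul] at hcontr
  have hψ0 : ψ 0 = c := by
    simp [hψdef, hb0def, hb1def, EuclideanSpace.single_apply]
  have hψ1 : ψ 1 = c := by
    simp [hψdef, hb0def, hb1def, EuclideanSpace.single_apply]
  rw [hψ0, hψ1] at hcontr
  have hb00 : b0 0 = 1 := by simp [hb0def, EuclideanSpace.single_apply]
  have hb01 : b0 1 = 0 := by simp [hb0def, EuclideanSpace.single_apply]
  have hb10 : b1 0 = 0 := by simp [hb1def, EuclideanSpace.single_apply]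
  have hb11 : b1 1 = 1 := by simp [hb1def, EuclideanSpace.single_apply]
  rw [hb00, hb01, hb10, hb11] at hcontr
  simp at hcontr
  exact hc hcontr
end

section
/- A nested clique graph K_{n₁}[K_{n₂}[⋯[K_{n_l}]]] is a k-regular graph with k = (n₁−1) + (n₂−1) + ⋯ + (n_l−1). -/
/-- `G` is built from the quotient graph `G'` by blowing each vertex of `G'` up into an
`m`-clique: the fibres of `π` are the blocks, each of size `m`; each block is a clique;
edges between distinct blocks occur only along edges of `G'`; and along each edge of
`G'` the cross edges form a perfect matching (every vertex has exactly one neighbour in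
each adjacent block). -/
def IsCliqueBlowupOf {V W : Type} (G : SimpleGraph V) (G' : SimpleGraph W)
    (m : ℕ) : Prop :=
  ∃ π : V → W,
    (∀ w : W, Set.ncard {v : V | π v = w} = m) ∧
    (∀ u v : V, π u = π v → u ≠ v → G.Adj u v) ∧
    (∀ u v : V, G.Adj u v → π u ≠ π v → G'.Adj (π u) (π v)) ∧
    (∀ (u : V) (w : W), G'.Adj (π u) w → ∃! v : V, π v = w ∧ G.Adj u v)

/-- `IsNestedClique ns G` states that `G` is the nested clique graph
K_{n₁}[K_{n₂}[⋯[K_{n_l}]]] where `ns = [n_l, n_{l-1}, …, n₁]` (innermost clique size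
first): for a single level it is a complete graph, and otherwise it is a clique blowup
of a nested clique graph one level up. -/
def IsNestedClique : List ℕ → ∀ {V : Type} [Fintype V], SimpleGraph V → Prop
  | [], _, _, _ => False
  | [n], V, _, G => Fintype.card V = n ∧ G = ⊤
  | m :: n :: ns, V, _, G => ∃ (W : Type) (instW : Fintype W) (G' : SimpleGraph W),
      @IsNestedClique (n :: ns) W instW G' ∧ IsCliqueBlowupOf G G' m

theorem nestedClique_regular_aux : ∀ (ns : List ℕ), ∀ {V : Type} [Fintype V]
    (G : SimpleGraph V), IsNestedClique ns G →
    ∀ v : V, Set.ncard (G.neighborSet v) = (ns.map (fun n => n - 1)).sum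
  | [], _, _, _, h, _ => h.elim
  | [n], V, _, G, h, v => by
    obtain ⟨hcard, rfl⟩ := h
    have h1 : (⊤ : SimpleGraph V).neighborSet v = {v}ᶜ := by
      ext u; simp [SimpleGraph.neighborSet, eq_comm]
    rw [h1]
    have h2 : ({v} : Set V).ncard + ({v} : Set V)ᶜ.ncard = Nat.card V :=
      Set.ncard_add_ncard_compl _
    have h3 : ({v} : Set V).ncard = 1 := Set.ncard_singleton v
    have h4 : Nat.card V = n := by rw [Nat.card_eq_fintype_card, hcard]
    simp only [List.map_cons, List.map_nil, List.sum_cons, List.sum_nil]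
    omega
  | m :: n :: ns, V, _, G, h, v => by
    obtain ⟨W, instW, G', hG', π, hfib, hclique, hcross, hmatch⟩ := h
    have IH := nestedClique_regular_aux (n :: ns) G' hG' (π v)
    set A : Set V := {u | G.Adj v u ∧ π u = π v} with hAdef
    set B : Set V := {u | G.Adj v u ∧ π u ≠ π v} with hBdef
    have hA : A = {u : V | π u = π v} \ {v} := by
      ext u
      simp only [hAdef, Set.mem_setOf_eq, Set.mem_diff, Set.mem_singleton_iff]
      constructor
      · rintro ⟨hadj, hpi⟩; exact ⟨hpi, fun h => G.irrefl (h ▸ hadj)⟩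
      · rintro ⟨hpi, hne⟩; exact ⟨hclique v u hpi.symm (Ne.symm hne), hpi⟩
    have hAcard : A.ncard = m - 1 := by
      rw [hA, Set.ncard_diff_singleton_of_mem (by simp : v ∈ {u : V | π u = π v}),
        hfib (π v)]
    have hBimg : π '' B = G'.neighborSet (π v) := by
      ext w
      simp only [Set.mem_image, hBdef, Set.mem_setOf_eq, SimpleGraph.mem_neighborSet]
      constructor
      · rintro ⟨u, ⟨hadj, hpi⟩, rfl⟩
        exact (hcross u v hadj.symm hpi).symm
      · intro hadj
        obtain ⟨u, ⟨hpu, hadj'⟩, -⟩ := hmatch v w hadj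
        exact ⟨u, ⟨hadj', by rw [hpu]; exact fun h => G'.irrefl (h ▸ hadj)⟩, hpu⟩
    have hBinj : Set.InjOn π B := by
      rintro u₁ ⟨hadj₁, hpi₁⟩ u₂ ⟨hadj₂, hpi₂⟩ hpi
      have hadjW : G'.Adj (π v) (π u₁) := hcross u₁ v hadj₁.symm hpi₁ |>.symm
      obtain ⟨x, -, hx⟩ := hmatch v (π u₁) hadjW
      rw [hx u₁ ⟨rfl, hadj₁⟩, hx u₂ ⟨hpi.symm, hadj₂⟩]
    have hBcard : B.ncard = ((n :: ns).map (fun n => n - 1)).sum := by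
      rw [← IH, ← hBimg, Set.ncard_image_of_injOn hBinj]
    have hunion : G.neighborSet v = A ∪ B := by
      ext u
      simp only [SimpleGraph.mem_neighborSet, Set.mem_union, hAdef, hBdef,
        Set.mem_setOf_eq]
      tauto
    have hdisj : Disjoint A B := by
      rw [Set.disjoint_left]
      rintro u ⟨-, hpi⟩ ⟨-, hpi'⟩
      exact hpi' hpi
    rw [hunion, Set.ncard_union_eq hdisj A.toFinite B.toFinite, hAcard, hBcard]
    simp

/-- A nested clique graph K_{n₁}[K_{n₂}[⋯[K_{n_l}]]] is a k-regular graph with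
k = (n₁−1) + (n₂−1) + ⋯ + (n_l−1). -/
theorem nestedClique_regular {V : Type} [Fintype V] (G : SimpleGraph V)
    (ns : List ℕ) (hne : ns ≠ []) (h : IsNestedClique ns G) :
    ∀ v : V, Set.ncard (G.neighborSet v) = (ns.map (fun n => n - 1)).sum :=
  nestedClique_regular_aux ns G h
end

section
/- Let G be a Paley graph on m = 4t+1 vertices, and let K be the graph obtained from G by adding a new vertex v_m joined to all vertices of G. Then for any original vertex u of G, the local complement K^u is a (2t+1)-regular graph. -/
set_option linter.unusedSectionVars false
open Finset

section Aux
variable {F : Type*} [Field F] [Fintype F] [DecidableEq F]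

lemma count_pm (f : F → ℤ) (h : ∀ x, f x = 0 ∨ f x = 1 ∨ f x = -1) :
    (∑ x, f x) = ((univ.filter (fun x => f x = 1)).card : ℤ)
      - ((univ.filter (fun x => f x = -1)).card : ℤ) := by
  rw [← Finset.sum_boole, ← Finset.sum_boole, ← Finset.sum_sub_distrib]
  refine Finset.sum_congr rfl fun x _ => ?_
  rcases h x with h | h | h <;> simp [h]

lemma count_add (f : F → ℤ) (h : ∀ x, f x = 0 ∨ f x = 1 ∨ f x = -1) :
    (univ.filter (fun x => f x = 1)).card + (univ.filter (fun x => f x = -1)).card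
      = (univ.filter (fun x => f x ≠ 0)).card := by
  rw [← Finset.card_union_of_disjoint]
  · congr 1
    ext x
    rcases h x with h | h | h <;> simp [h]
  · rw [Finset.disjoint_filter]
    intro x _ h1 h2
    rw [h1] at h2; norm_num at h2

lemma jacobsthal (hF : ringChar F ≠ 2) {c : F} (hc : c ≠ 0) :
    ∑ x : F, quadraticChar F x * quadraticChar F (x + c) = -1 := by
  have h0 : ∑ x : F, quadraticChar F x * quadraticChar F (x + c)
      = ∑ x ∈ univ.erase (0:F), quadraticChar F x * quadraticChar F (x + c) :=
    (Finset.sum_erase _ (by simp)).symm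
  have key : ∀ x ∈ univ.erase (0:F), quadraticChar F x * quadraticChar F (x + c)
      = quadraticChar F (1 + c * x⁻¹) := by
    intro x hx
    have hx0 : x ≠ 0 := (Finset.mem_erase.mp hx).1
    have hxc : x + c = x * (1 + c * x⁻¹) := by field_simp
    rw [hxc, map_mul, ← mul_assoc, ← sq, quadraticChar_sq_one hx0, one_mul]
  rw [h0, Finset.sum_congr rfl key]
  have hbij : ∑ x ∈ univ.erase (0:F), quadraticChar F (1 + c * x⁻¹)
      = ∑ y ∈ univ.erase (1:F), quadraticChar F y := by
    refine Finset.sum_nbij' (fun x => 1 + c * x⁻¹) (fun y => c * (y - 1)⁻¹) ?_ ?_ ?_ ?_ ?_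
    · intro x hx
      have hx0 : x ≠ 0 := (Finset.mem_erase.mp hx).1
      simp only [Finset.mem_erase, Finset.mem_univ, and_true]
      intro h
      have : c * x⁻¹ = 0 := by linear_combination h
      simp [hc, hx0] at this
    · intro y hy
      have hy1 : y ≠ 1 := (Finset.mem_erase.mp hy).1
      simp only [Finset.mem_erase, Finset.mem_univ, and_true]
      have : y - 1 ≠ 0 := sub_ne_zero.mpr hy1
      simp [hc, this]
    · intro x hx
      have hx0 : x ≠ 0 := (Finset.mem_erase.mp hx).1
      field_simp
      simp [hc]
    · intro y hy
      have hy1 : y ≠ 1 := (Finset.mem_erase.mp hy).1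
      have h1 : y - 1 ≠ 0 := sub_ne_zero.mpr hy1
      field_simp
      ring
    · intro x _; rfl
  rw [hbij, Finset.sum_erase_eq_sub (Finset.mem_univ _), quadraticChar_sum_zero hF, map_one]
  ring

lemma xor_prod {a b : ℤ} (ha : a = 1 ∨ a = -1) (hb : b = 1 ∨ b = -1) :
    Xor' (a = 1) (b = 1) ↔ a * b = -1 := by
  rcases ha with rfl | rfl <;> rcases hb with rfl | rfl <;> simp [Xor'] <;> norm_num

end Aux

section Counts
variable {F : Type*} [Field F] [Fintype F] [DecidableEq F] {t : ℕ}

lemma ringChar_ne_two (hcard : Fintype.card F = 4 * t + 1) : ringChar F ≠ 2 := by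
  intro h
  have := FiniteField.even_card_of_char_two h
  omega

lemma chi_neg_one (hcard : Fintype.card F = 4 * t + 1) : quadraticChar F (-1) = 1 := by
  have h : IsSquare (-1 : F) := FiniteField.isSquare_neg_one_iff.mpr (by omega)
  exact (quadraticChar_one_iff_isSquare (neg_ne_zero.mpr one_ne_zero)).mpr h

lemma chi_symm (hcard : Fintype.card F = 4 * t + 1) (a b : F) :
    quadraticChar F (b - a) = quadraticChar F (a - b) := by
  have : b - a = -1 * (a - b) := by ring
  rw [this, map_mul, chi_neg_one hcard, one_mul]

lemma chi_dich (y : F) :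
    quadraticChar F y = 0 ∨ quadraticChar F y = 1 ∨ quadraticChar F y = -1 := by
  by_cases h : y = 0
  · exact Or.inl (by simp [h])
  · exact Or.inr (quadraticChar_dichotomy h)

lemma card_filter_ne_zero : (univ.filter (fun y : F => quadraticChar F y ≠ 0)).card
    = Fintype.card F - 1 := by
  have : univ.filter (fun y : F => quadraticChar F y ≠ 0) = univ.erase 0 := by
    ext y
    simp [quadraticChar_eq_zero_iff, quadraticCharFun_eq_zero_iff]
  rw [this, Finset.card_erase_of_mem (Finset.mem_univ _), Finset.card_univ]

lemma card_sq (hcard : Fintype.card F = 4 * t + 1) :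
    (univ.filter (fun y : F => quadraticChar F y = 1)).card = 2 * t := by
  have h1 := count_pm (fun y : F => quadraticChar F y) chi_dich
  rw [quadraticChar_sum_zero (ringChar_ne_two hcard)] at h1
  have h2 := count_add (fun y : F => quadraticChar F y) chi_dich
  rw [card_filter_ne_zero, hcard] at h2
  beta_reduce at h1 h2
  omega

lemma card_nonsq (hcard : Fintype.card F = 4 * t + 1) :
    (univ.filter (fun y : F => quadraticChar F y = -1)).card = 2 * t := by
  have h1 := count_pm (fun y : F => quadraticChar F y) chi_dich
  rw [quadraticChar_sum_zero (ringChar_ne_two hcard)] at h1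
  have h2 := count_add (fun y : F => quadraticChar F y) chi_dich
  rw [card_filter_ne_zero, hcard] at h2
  beta_reduce at h1 h2
  omega

lemma prod_dich (u w x : F) : quadraticChar F (x - w) * quadraticChar F (x - u) = 0 ∨
    quadraticChar F (x - w) * quadraticChar F (x - u) = 1 ∨
    quadraticChar F (x - w) * quadraticChar F (x - u) = -1 := by
  rcases chi_dich (x - w) with h | h | h <;> rcases chi_dich (x - u) with h' | h' | h' <;>
    simp [h, h']

lemma card_prod (hcard : Fintype.card F = 4 * t + 1) {u w : F} (huw : u ≠ w) :
    (univ.filter (fun x : F =>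
      quadraticChar F (x - w) * quadraticChar F (x - u) = -1)).card = 2 * t := by
  have hsum : ∑ x : F, quadraticChar F (x - w) * quadraticChar F (x - u) = -1 := by
    have hc : u - w ≠ 0 := sub_ne_zero.mpr huw
    have := jacobsthal (ringChar_ne_two hcard) hc
    calc ∑ x : F, quadraticChar F (x - w) * quadraticChar F (x - u)
        = ∑ y : F, quadraticChar F (y + (u - w)) * quadraticChar F y := by
          refine (Fintype.sum_equiv (Equiv.addRight u)
            (fun y => quadraticChar F (y + (u - w)) * quadraticChar F y)
            (fun x => quadraticChar F (x - w) * quadraticChar F (x - u)) fun y => ?_).symm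
          simp only [Equiv.coe_addRight]
          rw [show y + u - w = y + (u - w) by ring, show y + u - u = y by ring]
      _ = ∑ y : F, quadraticChar F y * quadraticChar F (y + (u - w)) := by
          exact Finset.sum_congr rfl fun y _ => mul_comm _ _
      _ = -1 := this
  have h1 := count_pm (fun x : F => quadraticChar F (x - w) * quadraticChar F (x - u))
    (prod_dich u w)
  rw [hsum] at h1
  have h2 := count_add (fun x : F => quadraticChar F (x - w) * quadraticChar F (x - u))
    (prod_dich u w)
  have h3 : (univ.filter (fun x : F =>
      quadraticChar F (x - w) * quadraticChar F (x - u) ≠ 0)).card = 4 * t - 1 := by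
    have he : univ.filter (fun x : F =>
        quadraticChar F (x - w) * quadraticChar F (x - u) ≠ 0)
        = (univ.erase w).erase u := by
      ext x
      simp only [Finset.mem_filter, Finset.mem_univ, true_and, Finset.mem_erase, and_true,
        mul_ne_zero_iff, Ne, quadraticChar_eq_zero_iff, quadraticCharFun_eq_zero_iff,
        sub_eq_zero]
      tauto
    rw [he, Finset.card_erase_of_mem (Finset.mem_erase.mpr ⟨huw, Finset.mem_univ u⟩),
      Finset.card_erase_of_mem (Finset.mem_univ w), Finset.card_univ, hcard]
    omega
  have h1' : (-1 : ℤ) = ((univ.filter (fun x : F =>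
        quadraticChar F (x - w) * quadraticChar F (x - u) = 1)).card : ℤ)
      - ((univ.filter (fun x : F =>
        quadraticChar F (x - w) * quadraticChar F (x - u) = -1)).card : ℤ) := h1
  have h2' : (univ.filter (fun x : F =>
        quadraticChar F (x - w) * quadraticChar F (x - u) = 1)).card
      + (univ.filter (fun x : F =>
        quadraticChar F (x - w) * quadraticChar F (x - u) = -1)).card
      = (univ.filter (fun x : F =>
        quadraticChar F (x - w) * quadraticChar F (x - u) ≠ 0)).card := h2
  rw [h3] at h2'
  omega
end Counts

/-- Local complementation at a vertex `v`: toggle each edge between distinct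
neighbours of `v`, keeping all other adjacencies unchanged. -/
def localComp {V : Type*} (G : SimpleGraph V) (v : V) : SimpleGraph V where
  Adj a b := Xor' (G.Adj a b) (a ≠ b ∧ G.Adj v a ∧ G.Adj v b)
  symm := by
    constructor
    intro a b h
    rcases h with ⟨h1, h2⟩ | ⟨h1, h2⟩
    · exact Or.inl ⟨h1.symm, fun ⟨hne, ha, hb⟩ => h2 ⟨hne.symm, hb, ha⟩⟩
    · exact Or.inr ⟨⟨h1.1.symm, h1.2.2, h1.2.1⟩, fun hg => h2 hg.symm⟩
  loopless := by
    constructor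
    intro a h
    rcases h with ⟨h1, _⟩ | ⟨⟨h1, _⟩, _⟩
    · exact G.loopless.irrefl a h1
    · exact h1 rfl


/-- Add a universal vertex (the `none` vertex) joined to every vertex of `G`. -/
def addUniversal {V : Type*} (G : SimpleGraph V) : SimpleGraph (Option V) where
  Adj a b := match a, b with
    | some u, some w => G.Adj u w
    | some _, none => True
    | none, some _ => True
    | none, none => False
  symm := by
    constructor
    rintro (_ | u) (_ | w) h
    · exact h
    · trivial
    · trivial
    · exact G.symm.symm _ _ h
  loopless := by
    constructor
    rintro (_ | u) h
    · exact h
    · exact G.loopless.irrefl u h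

/-- The Paley graph on a finite field: vertices are the field elements, with an edge
between i and j iff i − j is a nonzero square (symmetrised, loops removed). -/
def paleyGraph (F : Type*) [Field F] : SimpleGraph F :=
  SimpleGraph.fromRel (fun i j => ∃ x : F, x ≠ 0 ∧ x ^ 2 = i - j)

section Graph
variable {F : Type*} [Field F] [Fintype F] [DecidableEq F] {t : ℕ}

@[simp] lemma localComp_adj {V : Type*} (G : SimpleGraph V) (v a b : V) :
    (localComp G v).Adj a b ↔ Xor' (G.Adj a b) (a ≠ b ∧ G.Adj v a ∧ G.Adj v b) := Iff.rfl

@[simp] lemma addUniversal_adj_some_some {V : Type*} (G : SimpleGraph V) (a b : V) :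
    (addUniversal G).Adj (some a) (some b) ↔ G.Adj a b := Iff.rfl

@[simp] lemma addUniversal_adj_some_none {V : Type*} (G : SimpleGraph V) (a : V) :
    (addUniversal G).Adj (some a) none ↔ True := Iff.rfl

@[simp] lemma addUniversal_adj_none_some {V : Type*} (G : SimpleGraph V) (a : V) :
    (addUniversal G).Adj none (some a) ↔ True := Iff.rfl

@[simp] lemma addUniversal_adj_none_none {V : Type*} (G : SimpleGraph V) :
    (addUniversal G).Adj (none : Option V) none ↔ False := Iff.rfl

lemma paley_adj (hcard : Fintype.card F = 4 * t + 1) {a b : F} :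
    (paleyGraph F).Adj a b ↔ quadraticChar F (a - b) = 1 := by
  rw [paleyGraph, SimpleGraph.fromRel_adj]
  constructor
  · rintro ⟨hne, ⟨x, hx0, hx2⟩ | ⟨x, hx0, hx2⟩⟩
    · rw [← hx2]; exact quadraticChar_sq_one' hx0
    · rw [← chi_symm hcard, ← hx2]; exact quadraticChar_sq_one' hx0
  · intro h
    have hne : a ≠ b := by
      rintro rfl
      simp at h
    refine ⟨hne, Or.inl ?_⟩
    obtain ⟨r, hr⟩ := (quadraticChar_one_iff_isSquare (sub_ne_zero.mpr hne)).mp h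
    have hr0 : r ≠ 0 := by
      rintro rfl
      exact sub_ne_zero.mpr hne (by simpa using hr)
    exact ⟨r, hr0, by rw [sq]; exact hr.symm⟩

lemma ncard_ins (e : Option F) (s : Finset F) (he : e ∉ (Option.some '' (s : Set F))) :
    (insert e (Option.some '' (s : Set F))).ncard = s.card + 1 := by
  rw [Set.ncard_insert_of_notMem he (Set.toFinite _),
    Set.ncard_image_of_injective _ (Option.some_injective F), Set.ncard_coe_finset]

end Graph

section Graph2
variable {F : Type*} [Field F] [Fintype F] [DecidableEq F] {t : ℕ}

lemma factB (hcard : Fintype.card F = 4 * t + 1) (u x : F) :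
    (paleyGraph F).Adj u x ↔ quadraticChar F (x - u) = 1 := by
  rw [paley_adj hcard, chi_symm hcard]

lemma factA (hcard : Fintype.card F = 4 * t + 1) (u x : F) :
    ¬ (paleyGraph F).Adj u x ↔ (x = u ∨ quadraticChar F (x - u) = -1) := by
  by_cases hx : x = u
  · subst hx
    simp [(paleyGraph F).irrefl]
  · rw [factB hcard]
    rcases quadraticChar_dichotomy (sub_ne_zero.mpr hx) with h | h <;>
      simp [h, hx] <;> norm_num

lemma factC (hcard : Fintype.card F = 4 * t + 1) {u w : F} (hwu : w ≠ u)
    (hadj : (paleyGraph F).Adj u w) (x : F) :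
    Xor' ((paleyGraph F).Adj w x) (¬ w = x ∧ (paleyGraph F).Adj u x)
      ↔ (x = u ∨ quadraticChar F (x - w) * quadraticChar F (x - u) = -1) := by
  by_cases hxu : x = u
  · subst hxu
    simp [Xor', hadj.symm, (paleyGraph F).irrefl, hwu]
  · by_cases hxw : x = w
    · subst hxw
      simp [Xor', hxu, sub_self, (paleyGraph F).irrefl]
    · have hwx : ¬ w = x := fun h => hxw h.symm
      rw [factB hcard, factB hcard]
      simp only [hwx, not_false_iff, true_and, hxu, false_or]
      exact xor_prod (quadraticChar_dichotomy (sub_ne_zero.mpr hxw))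
        (quadraticChar_dichotomy (sub_ne_zero.mpr hxu))

lemma card_shift (w : F) (c : ℤ) :
    (univ.filter fun x : F => quadraticChar F (x - w) = c).card
      = (univ.filter fun y : F => quadraticChar F y = c).card := by
  refine Finset.card_bij' (fun x _ => x - w) (fun y _ => y + w) ?_ ?_ ?_ ?_
  · intro a ha
    simp only [Finset.mem_filter, Finset.mem_univ, true_and] at ha ⊢
    exact ha
  · intro a ha
    simp only [Finset.mem_filter, Finset.mem_univ, true_and, add_sub_cancel_right] at ha ⊢
    exact ha
  · intro a _; ring
  · intro a _; ring

end Graph2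

/-- Let G be a Paley graph on m = 4t+1 vertices and K the graph obtained by adding a
new universal vertex. Then for any original vertex u of G, the local complement K^u is
a (2t+1)-regular graph. -/
theorem paley_addUniversal_localComp_regular (F : Type*) [Field F] [Fintype F]
    (t : ℕ) (hcard : Fintype.card F = 4 * t + 1) (u : F) :
    ∀ v : Option F,
      Set.ncard ((localComp (addUniversal (paleyGraph F)) (some u)).neighborSet v)
        = 2 * t + 1 := by
  classical
  intro v
  obtain _ | w := v
  · -- v = none
    have hset : (localComp (addUniversal (paleyGraph F)) (some u)).neighborSet none
        = insert (some u) (Option.some ''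
            ((univ.filter fun x : F => quadraticChar F (x - u) = -1) : Set F)) := by
      ext b
      simp only [SimpleGraph.mem_neighborSet, localComp_adj]
      obtain _ | x := b
      · simp [Xor']
      · simp only [addUniversal_adj_none_some, addUniversal_adj_some_none,
          addUniversal_adj_some_some, Set.mem_insert_iff, Set.mem_image, Finset.mem_coe,
          Finset.mem_filter, Finset.mem_univ, true_and, Option.some.injEq, Xor']
        have hns : (none : Option F) ≠ some x := by simp
        simp only [exists_eq_right]
        rw [← factA hcard]
        simp only [xor_def]
        tauto
    rw [hset, ncard_ins _ _ (by simp [sub_self]), card_shift, card_nonsq hcard]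
  · by_cases hw : w = u
    · subst hw
      have hset : (localComp (addUniversal (paleyGraph F)) (some w)).neighborSet (some w)
          = insert none (Option.some ''
              ((univ.filter fun x : F => quadraticChar F (x - w) = 1) : Set F)) := by
        ext b
        simp only [SimpleGraph.mem_neighborSet, localComp_adj]
        obtain _ | x := b
        · simp [Xor', (paleyGraph F).irrefl]
        · simp only [addUniversal_adj_some_some, addUniversal_adj_some_none,
            Set.mem_insert_iff, Set.mem_image, Finset.mem_coe, Finset.mem_filter,
            Finset.mem_univ, true_and, Option.some.injEq, Xor', exists_eq_right]
          rw [← factB hcard]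
          have hirr : ¬ (paleyGraph F).Adj w w := (paleyGraph F).irrefl
          have hns : (some x : Option F) ≠ none := by simp
          simp only [xor_def]
          tauto
      rw [hset, ncard_ins _ _ (by simp), card_shift, card_sq hcard]
    · by_cases hadj : (paleyGraph F).Adj u w
      · have huw : u ≠ w := fun h => hw h.symm
        have hset : (localComp (addUniversal (paleyGraph F)) (some u)).neighborSet (some w)
            = insert (some u) (Option.some '' ((univ.filter fun x : F =>
                quadraticChar F (x - w) * quadraticChar F (x - u) = -1) : Set F)) := by
          ext b
          simp only [SimpleGraph.mem_neighborSet, localComp_adj]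
          obtain _ | x := b
          · simp [Xor', hadj]
          · simp only [addUniversal_adj_some_some, addUniversal_adj_some_none,
              Set.mem_insert_iff, Set.mem_image, Finset.mem_coe, Finset.mem_filter,
              Finset.mem_univ, true_and, Option.some.injEq, Xor', exists_eq_right,
              ne_eq, hadj]
            rw [← factC hcard hw hadj x]
            simp [Xor']
        rw [hset, ncard_ins _ _ (by simp [sub_self]), card_prod hcard huw]
      · have hset : (localComp (addUniversal (paleyGraph F)) (some u)).neighborSet (some w)
            = insert none (Option.some ''
                ((univ.filter fun x : F => quadraticChar F (x - w) = 1) : Set F)) := by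
          ext b
          simp only [SimpleGraph.mem_neighborSet, localComp_adj]
          obtain _ | x := b
          · simp [Xor', hadj]
          · simp only [addUniversal_adj_some_some, addUniversal_adj_some_none,
              Set.mem_insert_iff, Set.mem_image, Finset.mem_coe, Finset.mem_filter,
              Finset.mem_univ, true_and, Option.some.injEq, Xor', exists_eq_right]
            rw [← factB hcard]
            have hns : (some x : Option F) ≠ none := by simp
            simp only [xor_def]
            tauto
        rw [hset, ncard_ins _ _ (by simp), card_shift, card_sq hcard]
end
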